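/- Let Ω ⊂ ℝ^k be open with Lebesgue measure μ, let ψ be a strictly increasing Young function satisfying condition Δ2 globally with lim_{t→0+} ψ(t)/t = 0 and lim_{t→∞} t/ψ(t) = 0, and let τ(t)=1/ψ(1/t) for t>0, τ(0)=0. Then the functional ρ(f) = ∫₀^∞ τ⁻¹(μ_f(s)) ds on nonnegative measurable functions on Ω has the Fatou property: if (f_n) is a sequence of nonnegative measurable functions increasing almost everywhere to f, then ρ(f_n) increases to ρ(f). -/

import Mathlib

/-!
Since `τ` is increasing, so is its inverse `σ`, and `σ` maps `[0, ∞)` onto `[0, ∞)`; hence its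
extension to `[0, ∞]` is a monotone surjection, therefore continuous, and it commutes with
suprema. If `f_n ↑ f` a.e., then `{f_n > s} ↑ {f > s}` up to null sets, so `μ_{f_n}(s) ↑ μ_f(s)`
by continuity of the measure from below, hence `τ⁻¹(μ_{f_n}(s)) ↑ τ⁻¹(μ_f(s))` for every `s`,
and the monotone convergence theorem gives `ρ(f_n) ↑ ρ(f)`.
-/

open MeasureTheory Filter Topology Set
open scoped ENNReal

/-- A (finite-valued) Young function: non-decreasing, left-continuous and convex on
`[0, ∞)`, with `ψ 0 = 0 = lim_{t→0+} ψ t` and `lim_{t→∞} ψ t = ∞`. -/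
def IsYoung (ψ : ℝ → ℝ) : Prop :=
  MonotoneOn ψ (Set.Ici 0) ∧
  ConvexOn ℝ (Set.Ici 0) ψ ∧
  (∀ t : ℝ, 0 < t → Tendsto ψ (𝓝[<] t) (𝓝 (ψ t))) ∧
  ψ 0 = 0 ∧ Tendsto ψ (𝓝[>] 0) (𝓝 0) ∧
  Tendsto ψ atTop atTop

/-- The Young function `ψ` satisfies condition `Δ₂` globally. -/
def Delta2 (ψ : ℝ → ℝ) : Prop :=
  ∃ d : ℝ, 1 < d ∧ ∀ t : ℝ, 0 < t → ψ (2 * t) ≤ d * ψ t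

/-- The distribution function `μ_f(s) = μ {x ∈ Ω : f x > s}` of a nonnegative
function `f` on `Ω`. -/
noncomputable def distribFn₀ {k : ℕ} (Ω : Set (EuclideanSpace ℝ (Fin k)))
    (f : EuclideanSpace ℝ (Fin k) → ℝ) (s : ℝ) : ℝ≥0∞ :=
  volume {x | x ∈ Ω ∧ s < f x}

/-- The `[0, ∞]`-valued extension of `σ = τ⁻¹ : [0, ∞) → [0, ∞)`. -/
noncomputable def extInv (σ : ℝ → ℝ) : ℝ≥0∞ → ℝ≥0∞ :=
  fun a => if a = ∞ then ∞ else ENNReal.ofReal (σ a.toReal)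

/-- The functional `ρ(f) = ∫₀^∞ τ⁻¹(μ_f(s)) ds` on nonnegative measurable functions
on `Ω`, where `σ = τ⁻¹`. -/
noncomputable def rhoFn {k : ℕ} (Ω : Set (EuclideanSpace ℝ (Fin k))) (σ : ℝ → ℝ)
    (f : EuclideanSpace ℝ (Fin k) → ℝ) : ℝ≥0∞ :=
  ∫⁻ s in Set.Ioi (0 : ℝ), extInv σ (distribFn₀ Ω f s)

theorem Monotone.map_iSup_of_surjective {α β ι : Type*}
    [CompleteLinearOrder α] [TopologicalSpace α] [OrderTopology α]
    [CompleteLinearOrder β] [TopologicalSpace β] [OrderTopology β] [DenselyOrdered β]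
    {f : α → β} (hf : Monotone f) (hsurj : Function.Surjective f) (g : ι → α) :
    f (⨆ i, g i) = ⨆ i, f (g i) := by
  have hbot : f ⊥ = ⊥ := by
    obtain ⟨a, ha⟩ := hsurj ⊥
    exact le_bot_iff.1 (ha ▸ hf bot_le)
  exact hf.map_iSup_of_continuousAt (hf.continuous_of_surjective hsurj).continuousAt hbot

section DistributionFunction

variable {α : Type*} [MeasurableSpace α] {μ : Measure α}

theorem measure_lt_mono_of_ae_le {g h : α → ℝ} (hgh : g ≤ᵐ[μ] h) (s : ℝ) :
    μ {x | s < g x} ≤ μ {x | s < h x} :=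
  measure_mono_ae (hgh.mono fun _ hx hxs => hxs.trans_le hx)

theorem measure_lt_eq_iSup_of_ae_monotone_tendsto {fs : ℕ → α → ℝ} {f : α → ℝ}
    (hmono : ∀ᵐ x ∂μ, Monotone fun n => fs n x)
    (hlim : ∀ᵐ x ∂μ, Tendsto (fun n => fs n x) atTop (𝓝 (f x))) (s : ℝ) :
    μ {x | s < f x} = ⨆ n, μ {x | s < fs n x} := by
  have hunion : {x | s < f x} =ᵐ[μ] ⋃ n, {x | s < fs n x} := by
    refine eventuallyEq_set.2 ?_
    filter_upwards [hmono, hlim] with x hx hlx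
    simp only [mem_iUnion]
    exact ⟨fun hsf => (hlx.eventually (eventually_gt_nhds hsf)).exists,
      fun ⟨n, hn⟩ => hn.trans_le (hx.ge_of_tendsto hlx n)⟩
  have hacc : ∀ n, accumulate (fun m => {x | s < fs m x}) n =ᵐ[μ] {x | s < fs n x} := by
    intro n
    refine eventuallyEq_set.2 ?_
    filter_upwards [hmono] with x hx
    simp only [mem_accumulate]
    exact ⟨fun ⟨m, hm, hxm⟩ => hxm.trans_le (hx hm), fun hxn => ⟨n, le_rfl, hxn⟩⟩
  rw [measure_congr hunion, measure_iUnion_eq_iSup_accumulate]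
  exact iSup_congr fun n => measure_congr (hacc n)

end DistributionFunction

theorem distribFn₀_eq_restrict {k : ℕ} {Ω : Set (EuclideanSpace ℝ (Fin k))}
    (hΩ : MeasurableSet Ω) (g : EuclideanSpace ℝ (Fin k) → ℝ) (s : ℝ) :
    distribFn₀ Ω g s = volume.restrict Ω {x | s < g x} := by
  rw [Measure.restrict_apply' hΩ, inter_comm]
  rfl

theorem distribFn₀_antitone {k : ℕ} (Ω : Set (EuclideanSpace ℝ (Fin k)))
    (g : EuclideanSpace ℝ (Fin k) → ℝ) : Antitone (distribFn₀ Ω g) :=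
  fun _ _ hst => measure_mono fun _ hx => ⟨hx.1, hst.trans_lt hx.2⟩

section Inverse

variable {ψ τ σ : ℝ → ℝ}

theorem tau_nonneg (hψ : StrictMonoOn ψ (Ici 0)) (hψ0 : ψ 0 = 0) (hτ0 : τ 0 = 0)
    (hτ : ∀ t : ℝ, 0 < t → τ t = 1 / ψ (1 / t)) {t : ℝ} (ht : 0 ≤ t) : 0 ≤ τ t := by
  rcases ht.eq_or_lt with rfl | ht
  · exact hτ0.ge
  · rw [hτ t ht]
    exact one_div_nonneg.2 (hψ0 ▸ hψ.monotoneOn self_mem_Ici (one_div_pos.2 ht).le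
      (one_div_pos.2 ht).le)

theorem tau_monotoneOn (hψ : StrictMonoOn ψ (Ici 0)) (hψ0 : ψ 0 = 0) (hτ0 : τ 0 = 0)
    (hτ : ∀ t : ℝ, 0 < t → τ t = 1 / ψ (1 / t)) : MonotoneOn τ (Ici 0) := by
  intro a ha b hb hab
  rcases (mem_Ici.1 ha).eq_or_lt with rfl | ha
  · rw [hτ0]
    exact tau_nonneg hψ hψ0 hτ0 hτ hb
  · have hb : 0 < b := ha.trans_le hab
    have hψb : 0 < ψ (1 / b) := hψ0 ▸ hψ self_mem_Ici (one_div_pos.2 hb).le (one_div_pos.2 hb)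
    rw [hτ a ha, hτ b hb]
    exact one_div_le_one_div_of_le hψb (hψ.monotoneOn (one_div_pos.2 hb).le
      (one_div_pos.2 ha).le (one_div_le_one_div_of_le ha hab))

theorem extInv_monotone (hσ : MonotoneOn σ (Ici 0)) : Monotone (extInv σ) := by
  intro a b hab
  rcases eq_or_ne b ∞ with rfl | hb
  · simp [extInv]
  · have ha : a ≠ ∞ := ne_top_of_le_ne_top hb hab
    simp only [extInv, if_neg ha, if_neg hb]
    exact ENNReal.ofReal_le_ofReal (hσ ENNReal.toReal_nonneg ENNReal.toReal_nonneg
      (ENNReal.toReal_mono hb hab))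

theorem extInv_surjective (hτ : ∀ t : ℝ, 0 ≤ t → 0 ≤ τ t)
    (hσ_left : ∀ t : ℝ, 0 ≤ t → σ (τ t) = t) : Function.Surjective (extInv σ) := by
  intro b
  rcases eq_or_ne b ∞ with rfl | hb
  · exact ⟨∞, if_pos rfl⟩
  · refine ⟨ENNReal.ofReal (τ b.toReal), ?_⟩
    simp only [extInv, if_neg ENNReal.ofReal_ne_top,
      ENNReal.toReal_ofReal (hτ _ ENNReal.toReal_nonneg), hσ_left _ ENNReal.toReal_nonneg,
      ENNReal.ofReal_toReal hb]

end Inverse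

theorem stmt13_general {k : ℕ}
    (Ω : Set (EuclideanSpace ℝ (Fin k))) (hΩ : IsOpen Ω)
    (ψ : ℝ → ℝ) (hY : IsYoung ψ) (hsm : StrictMonoOn ψ (Set.Ici 0))
    (τ : ℝ → ℝ) (hτ0 : τ 0 = 0) (hτ : ∀ t : ℝ, 0 < t → τ t = 1 / ψ (1 / t))
    (σ : ℝ → ℝ) (hσ_nonneg : ∀ t : ℝ, 0 ≤ t → 0 ≤ σ t)
    (hσ_left : ∀ t : ℝ, 0 ≤ t → σ (τ t) = t)
    (hσ_right : ∀ t : ℝ, 0 ≤ t → τ (σ t) = t)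
    (fseq : ℕ → EuclideanSpace ℝ (Fin k) → ℝ) (f : EuclideanSpace ℝ (Fin k) → ℝ)
    (hmono : ∀ᵐ x ∂(volume.restrict Ω), Monotone (fun n => fseq n x))
    (hlim : ∀ᵐ x ∂(volume.restrict Ω), Tendsto (fun n => fseq n x) atTop (𝓝 (f x))) :
    Monotone (fun n => rhoFn Ω σ (fseq n)) ∧
      Tendsto (fun n => rhoFn Ω σ (fseq n)) atTop (𝓝 (rhoFn Ω σ f)) := by
  have hψ0 : ψ 0 = 0 := hY.2.2.2.1
  have hσ_mono : MonotoneOn σ (Ici 0) :=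
    Function.monotoneOn_of_rightInvOn_of_mapsTo (tau_monotoneOn hsm hψ0 hτ0 hτ) hσ_right
      hσ_nonneg
  have hext := extInv_monotone hσ_mono
  have hsurj := extInv_surjective (fun _ => tau_nonneg hsm hψ0 hτ0 hτ) hσ_left
  have hdist_mono : ∀ s, Monotone fun n => distribFn₀ Ω (fseq n) s := fun s _ _ hmn => by
    simp only [distribFn₀_eq_restrict hΩ.measurableSet]
    exact measure_lt_mono_of_ae_le (hmono.mono fun _ hx => hx hmn) s
  have hdist_sup : ∀ s, distribFn₀ Ω f s = ⨆ n, distribFn₀ Ω (fseq n) s := by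
    simp only [distribFn₀_eq_restrict hΩ.measurableSet]
    exact measure_lt_eq_iSup_of_ae_monotone_tendsto hmono hlim
  have hρ_mono : Monotone fun n => rhoFn Ω σ (fseq n) := fun _ _ hmn =>
    lintegral_mono fun s => hext (hdist_mono s hmn)
  have hρ_sup : rhoFn Ω σ f = ⨆ n, rhoFn Ω σ (fseq n) := by
    simp only [rhoFn, hdist_sup, hext.map_iSup_of_surjective hsurj]
    exact lintegral_iSup (fun n => (hext.comp_antitone (distribFn₀_antitone Ω _)).measurable)
      fun _ _ hmn s => hext (hdist_mono s hmn)
  exact ⟨hρ_mono, hρ_sup ▸ tendsto_atTop_iSup hρ_mono⟩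

/-- The functional `ρ(f) = ∫₀^∞ τ⁻¹(μ_f(s)) ds` on nonnegative
measurable functions on `Ω` has the Fatou property: if `(f_n)` increases almost
everywhere to `f`, then `ρ(f_n)` increases to `ρ(f)`. -/
theorem stmt13 {k : ℕ}
    (Ω : Set (EuclideanSpace ℝ (Fin k))) (hΩ : IsOpen Ω)
    (ψ : ℝ → ℝ) (hY : IsYoung ψ) (hsm : StrictMonoOn ψ (Set.Ici 0)) (hΔ : Delta2 ψ)
    (h0 : Tendsto (fun t => ψ t / t) (𝓝[>] 0) (𝓝 0))
    (htop : Tendsto (fun t => t / ψ t) atTop (𝓝 0))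
    (τ : ℝ → ℝ) (hτ0 : τ 0 = 0) (hτ : ∀ t : ℝ, 0 < t → τ t = 1 / ψ (1 / t))
    (σ : ℝ → ℝ) (hσ_nonneg : ∀ t : ℝ, 0 ≤ t → 0 ≤ σ t)
    (hσ_left : ∀ t : ℝ, 0 ≤ t → σ (τ t) = t)
    (hσ_right : ∀ t : ℝ, 0 ≤ t → τ (σ t) = t)
    (fseq : ℕ → EuclideanSpace ℝ (Fin k) → ℝ) (f : EuclideanSpace ℝ (Fin k) → ℝ)
    (hfseq : ∀ n, Measurable (fseq n)) (hf : Measurable f)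
    (hfseq0 : ∀ n, ∀ᵐ x ∂(volume.restrict Ω), 0 ≤ fseq n x)
    (hf0 : ∀ᵐ x ∂(volume.restrict Ω), 0 ≤ f x)
    (hmono : ∀ᵐ x ∂(volume.restrict Ω), Monotone (fun n => fseq n x))
    (hlim : ∀ᵐ x ∂(volume.restrict Ω), Tendsto (fun n => fseq n x) atTop (𝓝 (f x))) :
    Monotone (fun n => rhoFn Ω σ (fseq n)) ∧
      Tendsto (fun n => rhoFn Ω σ (fseq n)) atTop (𝓝 (rhoFn Ω σ f)) :=
  stmt13_general Ω hΩ ψ hY hsm τ hτ0 hτ σ hσ_nonneg hσ_left hσ_right fseq f hmono hlim
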